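/- Let n be odd, G the dihedral group of order 2n acting on ZMod n by (r j)·i = i + j and (sr j)·i = j − i, and R = MonoidAlgebra ℤ G the integral group ring. Let ℤ[ZMod n] be the associated permutation R-module (finitely supported functions ZMod n → ℤ with G permuting coordinates by the above action), let ε : ℤ[ZMod n] → ℤ be the augmentation map f ↦ ∑_i f(i) onto ℤ with trivial G-action (an R-module map), and let K = ker ε, an R-module. If M is an R-module on which multiplication by 2n is bijective, then for every i ≥ 1 the abelian group Ext^i_R(K, M) is zero. -/

import Mathlib

open CategoryTheory

/-- The action of the dihedral group `D_n` on `ZMod n`: the rotation `r j` sends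
`i` to `i + j` and the reflection `sr j` sends `i` to `j - i`. -/
def dmove (n : ℕ) : DihedralGroup n → ZMod n → ZMod n
  | DihedralGroup.r j, i => i + j
  | DihedralGroup.sr j, i => j - i

lemma dmove_one (n : ℕ) (i : ZMod n) : dmove n 1 i = i := by
  rw [DihedralGroup.one_def]; simp [dmove]

lemma dmove_mul (n : ℕ) (g h : DihedralGroup n) (i : ZMod n) :
    dmove n (g * h) i = dmove n h (dmove n g i) := by
  cases g <;> cases h <;>
    simp only [DihedralGroup.r_mul_r, DihedralGroup.r_mul_sr, DihedralGroup.sr_mul_r,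
      DihedralGroup.sr_mul_sr, dmove] <;> ring

/-- The permutation of `ZMod n` given by an element of `D_n`. -/
def dperm (n : ℕ) (g : DihedralGroup n) : ZMod n ≃ ZMod n where
  toFun := dmove n g
  invFun := dmove n g⁻¹
  left_inv i := by rw [← dmove_mul, mul_inv_cancel, dmove_one]
  right_inv i := by rw [← dmove_mul, inv_mul_cancel, dmove_one]

/-- The permutation representation `ℤ[ZMod n]` of `D_n` over `ℤ`: the group element
`g` sends the basis vector at `i` to the basis vector at `g·i`; equivalently
`(g • f) i = f (g⁻¹ · i)` (with Mathlib's `DihedralGroup` multiplication, which is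
the reverse of the geometric composition of the maps `dmove`, the inverse `g⁻¹`
corresponds to precomposition with `dmove n g`). -/
noncomputable def drep (n : ℕ) : Representation ℤ (DihedralGroup n) (ZMod n →₀ ℤ) where
  toFun g := (Finsupp.domLCongr (dperm n g).symm).toLinearMap
  map_one' := by
    apply LinearMap.ext; intro f; apply Finsupp.ext; intro i
    beta_reduce
    rw [LinearEquiv.coe_coe, Finsupp.domLCongr_apply, Finsupp.domCongr_apply,
      Finsupp.equivMapDomain_apply, Equiv.symm_symm, Module.End.one_apply]
    show f (dmove n 1 i) = f i
    rw [dmove_one]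
  map_mul' g h := by
    apply LinearMap.ext; intro f; apply Finsupp.ext; intro i
    beta_reduce
    rw [Module.End.mul_apply]
    repeat rw [LinearEquiv.coe_coe, Finsupp.domLCongr_apply, Finsupp.domCongr_apply,
      Finsupp.equivMapDomain_apply, Equiv.symm_symm]
    show f (dmove n (g * h) i) = f (dmove n h (dmove n g i))
    rw [dmove_mul]

/-- The permutation module `ℤ[ZMod n]` as an object of `Rep ℤ D_n`. -/
noncomputable def permRep (n : ℕ) : Rep ℤ (DihedralGroup n) := Rep.of (drep n)

/-- The augmentation, sending `f : ZMod n →₀ ℤ` to the sum of its values, as a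
morphism to the trivial representation `ℤ`. -/
noncomputable def aug (n : ℕ) : permRep n ⟶ Rep.trivial ℤ (DihedralGroup n) ℤ :=
  Rep.ofHom (ρ := drep n) (σ := Representation.trivial ℤ (DihedralGroup n) ℤ) {
  toLinearMap := Finsupp.linearCombination ℤ fun _ : ZMod n => (1 : ℤ)
  isIntertwining' g := by
    apply LinearMap.ext; intro f
    show Finsupp.linearCombination ℤ (fun _ : ZMod n => (1 : ℤ))
        (Finsupp.equivMapDomain (dperm n g).symm f) =
      Finsupp.linearCombination ℤ (fun _ : ZMod n => (1 : ℤ)) f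
    rw [Finsupp.equivMapDomain_eq_mapDomain, Finsupp.linearCombination_mapDomain]
    rfl }

/-- The augmentation ideal-like kernel `K = ker ε`, as a module over the integral
group ring `R = MonoidAlgebra ℤ D_n`, i.e. as an object of `ModuleCat R`, obtained
by transporting the representations along the equivalence
`Rep ℤ D_n ≌ ModuleCat (MonoidAlgebra ℤ D_n)` and taking the kernel. -/
noncomputable def augKernel (n : ℕ) :
    ModuleCat (MonoidAlgebra ℤ (DihedralGroup n)) :=
  CategoryTheory.Limits.kernel
    ((Rep.equivalenceModuleMonoidAlgebra (k := ℤ) (G := DihedralGroup n)).functor.map (aug n))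

/-!
Let `R = ℤ[G]` for a finite group `G`, and let `K` be an `R`-module that is projective over `ℤ`,
as the augmentation kernel is, being a subgroup of the free abelian group `ℤ[ZMod n]`.
Averaging over `G` a `ℤ`-linear section of an `R`-linear surjection `P → K` with `P` projective
gives an `R`-linear `s : K → P` whose composite with `P → K` is `|G| • 𝟙`. Hence `|G|` acts on
`Ext^{i+1}_R(K, M)` through `Ext^{i+1}_R(P, M) = 0`, i.e. as zero; but it also acts through the
automorphism `|G| • 𝟙` of `M`, i.e. invertibly, so the group vanishes.
-/

open MonoidAlgebra in
theorem MonoidAlgebra.exists_comp_eq_card_smul_id {k G V W : Type*} [CommRing k] [Group G]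
    [Fintype G] [AddCommGroup V] [Module k V] [Module k[G] V] [IsScalarTower k k[G] V]
    [AddCommGroup W] [Module k W] [Module k[G] W] [IsScalarTower k k[G] W]
    [Module.Projective k V] (p : W →ₗ[k[G]] V) (hp : Function.Surjective p) :
    ∃ s : V →ₗ[k[G]] W, p ∘ₗ s = Fintype.card G • LinearMap.id := by
  obtain ⟨s, hs⟩ := Module.projective_lifting_property (p.restrictScalars k) LinearMap.id hp
  refine ⟨s.sumOfConjugatesEquivariant G, LinearMap.ext fun v => ?_⟩
  have hconj (g : G) : p (s.conjugate g v) = v := by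
    rw [LinearMap.conjugate_apply, p.map_smul, ← p.restrictScalars_apply k,
      ← LinearMap.comp_apply, hs, LinearMap.id_apply, smul_smul, single_mul_single,
      inv_mul_cancel, mul_one, ← one_def, one_smul]
  simp [LinearMap.sumOfConjugatesEquivariant_apply, hconj]

namespace CategoryTheory

open Limits

section LeftDerived

variable {C : Type*} [Category C] [Abelian C] [HasProjectiveResolutions C]
  {D : Type*} [Category D] [Abelian D]

instance Functor.leftDerived_additive (F : C ⥤ D) [F.Additive] (n : ℕ) :
    (F.leftDerived n).Additive where
  map_add {X Y f g} := by
    let P := projectiveResolution X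
    let Q := projectiveResolution Y
    rw [F.leftDerived_map_eq n (f + g) (P.lift f Q + P.lift g Q) (by
        simp only [Preadditive.add_comp, ProjectiveResolution.lift_commutes, Functor.map_add,
          Preadditive.comp_add]),
      F.leftDerived_map_eq n f _ (P.lift_commutes f Q),
      F.leftDerived_map_eq n g _ (P.lift_commutes g Q)]
    simp only [Functor.map_add, Preadditive.add_comp, Preadditive.comp_add]

lemma NatTrans.leftDerived_add {F G : C ⥤ D} [F.Additive] [G.Additive] (α β : F ⟶ G) (n : ℕ) :
    NatTrans.leftDerived (α + β) n = NatTrans.leftDerived α n + NatTrans.leftDerived β n := by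
  ext X
  have h : (NatTrans.mapHomologicalComplex (α + β) (ComplexShape.down ℕ)).app
      (projectiveResolution X).complex =
      (NatTrans.mapHomologicalComplex α _).app _ + (NatTrans.mapHomologicalComplex β _).app _ := by
    ext i
    rfl
  simp only [NatTrans.app_add, ProjectiveResolution.leftDerived_app_eq _ (projectiveResolution X),
    h, Functor.map_add, Preadditive.add_comp, Preadditive.comp_add]

end LeftDerived

section Ext

variable {R : Type*} [Ring R] {C : Type*} [Category C] [Abelian C] [Linear R C]
  [EnoughProjectives C]

instance (n : ℕ) (Y : C) : ((Ext R C n).flip.obj Y).Additive :=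
  Functor.leftOp_additive _

instance (n : ℕ) (X : Cᵒᵖ) : ((Ext R C n).obj X).Additive where
  map_add {Y Y' f g} := by
    have h : ((linearYoneda R C).map (f + g)).rightOp =
        ((linearYoneda R C).map f).rightOp + ((linearYoneda R C).map g).rightOp := by
      ext Z : 2
      apply Quiver.Hom.unop_inj
      ext h : 2
      exact Preadditive.comp_add _ _ _ h f g
    change (NatTrans.leftDerived _ n).leftOp.app X = _
    rw [h, NatTrans.leftDerived_add]
    rfl

theorem isZero_Ext_succ_of_zsmul_id_eq_comp {X Y P : C} [Projective P] (m : ℤ)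
    (s : X ⟶ P) (p : P ⟶ X) (hsp : s ≫ p = m • 𝟙 X) [IsIso (m • 𝟙 Y)] (i : ℕ) :
    IsZero (((Ext R C (i + 1)).obj (Opposite.op X)).obj Y) := by
  set E := ((Ext R C (i + 1)).obj (Opposite.op X)).obj Y
  have hfactor : m • 𝟙 E = 0 := by
    have hop : m • 𝟙 (Opposite.op X) = p.op ≫ s.op := by
      rw [← op_comp, hsp]
      rfl
    have h := ((Ext R C (i + 1)).flip.obj Y).map_zsmul (f := 𝟙 (Opposite.op X)) (r := m)
    have hzero := (isZero_Ext_succ_of_projective P Y i).eq_zero_of_tgt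
      (((Ext R C (i + 1)).flip.obj Y).map p.op)
    rw [Functor.map_id, hop, Functor.map_comp, hzero, zero_comp] at h
    exact h.symm
  have hiso : IsIso (m • 𝟙 E) := by
    rw [← Functor.map_id, ← Functor.map_zsmul]
    infer_instance
  rw [hfactor] at hiso
  exact IsZero.of_mono_zero E E

end Ext

end CategoryTheory

theorem ModuleCat.exists_comp_π_eq_card_smul_id {G : Type*} [Group G] [Fintype G]
    (K : ModuleCat (MonoidAlgebra ℤ G)) [Module.Projective ℤ K] :
    ∃ s : K ⟶ Projective.over K, s ≫ Projective.π K = (Fintype.card G : ℤ) • 𝟙 K := by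
  obtain ⟨s, hs⟩ := MonoidAlgebra.exists_comp_eq_card_smul_id (Projective.π K).hom
    ((ModuleCat.epi_iff_surjective _).1 inferInstance)
  refine ⟨ModuleCat.ofHom s, ?_⟩
  ext x
  exact (LinearMap.congr_fun hs x).trans (by simp)

theorem ModuleCat.projective_int_kernel {A : Type*} [Ring A] {X Y : ModuleCat A}
    [Module.Finite ℤ X] [Module.Free ℤ X] (f : X ⟶ Y) :
    Module.Projective ℤ (Limits.kernel f : ModuleCat A) :=
  let e : (LinearMap.ker f.hom).restrictScalars ℤ ≃+ (Limits.kernel f : ModuleCat A) :=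
    (ModuleCat.kernelIsoKer f).toLinearEquiv.toAddEquiv.symm
  Module.Projective.of_equiv e.toIntLinearEquiv

instance (n : ℕ) [NeZero n] : Module.Projective ℤ (augKernel n) := by
  let e : (Rep.equivalenceModuleMonoidAlgebra.functor.obj (permRep n) : Type) ≃+ (ZMod n →₀ ℤ) :=
    (permRep n).ρ.asModuleEquiv.toAddEquiv
  have := Module.Finite.equiv e.symm.toIntLinearEquiv
  have := Module.Free.of_equiv e.symm.toIntLinearEquiv
  exact ModuleCat.projective_int_kernel _

theorem stmt16 (n : ℕ) (hodd : Odd n)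
    (M : ModuleCat (MonoidAlgebra ℤ (DihedralGroup n)))
    (h2n : Function.Bijective fun x : M => ((2 * n : ℕ) : ℤ) • x) :
    ∀ i : ℕ, 1 ≤ i →
      Subsingleton (((Ext ℤ (ModuleCat (MonoidAlgebra ℤ (DihedralGroup n))) i).obj
        (Opposite.op (augKernel n))).obj M) := by
  intro i hi
  obtain ⟨i, rfl⟩ := Nat.exists_eq_add_of_le' hi
  have : NeZero n := ⟨hodd.pos.ne'⟩
  obtain ⟨s, hs⟩ := ModuleCat.exists_comp_π_eq_card_smul_id (augKernel n)
  rw [DihedralGroup.card] at hs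
  have : IsIso (((2 * n : ℕ) : ℤ) • (𝟙 M : M ⟶ M)) :=
    (ConcreteCategory.isIso_iff_bijective _).2 h2n
  exact ModuleCat.subsingleton_of_isZero (isZero_Ext_succ_of_zsmul_id_eq_comp _ s _ hs i)
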